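/- arXiv:1802.01251 — 10 statements merged into one kernel-verified Lean document; each statement's English description precedes it below -/
import Mathlib

section
/- For any neural code C ⊆ F_2^n and any motif a ∈ Mot(C), the polarized motif a^p is a motif of the polarized code C^p; that is, {a^p : a ∈ Mot(C)} ⊆ Mot(C^p). -/
open MvPolynomial

/-- The field with two elements. -/
abbrev F2 := ZMod 2

/-- A motif indexed by `ι`: at each index it is `0`, `1`, or `*` (represented by `none`). -/
abbrev Motif (ι : Type*) := ι → Option F2

/-- The partial order on motifs: `a ≤ b` iff `a i = b i` for every index `i` with `b i ≠ *`. -/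
def MotifLE {ι : Type*} (a b : Motif ι) : Prop :=
  ∀ (i : ι) (x : F2), b i = some x → a i = some x

/-- The variety of a motif: all words agreeing with the motif on its non-`*` coordinates. -/
def variety {ι : Type*} (a : Motif ι) : Set (ι → F2) :=
  {w | ∀ (i : ι) (x : F2), a i = some x → w i = x}

/-- `a` is a motif of the code `C` iff its variety is contained in `C`. -/
def IsMotifOf {ι : Type*} (C : Set (ι → F2)) (a : Motif ι) : Prop :=
  variety a ⊆ C

/-- The set of maximal motifs of a code `C`. -/
def maxMot {ι : Type*} (C : Set (ι → F2)) : Set (Motif ι) :=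
  {a | IsMotifOf C a ∧ ∀ b : Motif ι, IsMotifOf C b → MotifLE a b → a = b}

/-- Two motifs are disjoint if at some index both are non-`*` and they differ. -/
def DisjointMotifs {ι : Type*} (a b : Motif ι) : Prop :=
  ∃ (i : ι) (x : F2), a i = some x ∧ b i = some (1 - x)

/-- Polarization of a motif of length `n`, as a motif of length `2n`
(indexed by `Fin n ⊕ Fin n`; `Sum.inl i` is coordinate `i`, `Sum.inr i` is coordinate `n+i`). -/
def polMotif {n : ℕ} (a : Motif (Fin n)) : Motif (Fin n ⊕ Fin n)
  | Sum.inl i => if a i = some 0 then some 0 else none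
  | Sum.inr i => if a i = some 1 then some 0 else none

/-- The bar of a motif: `0 ↦ 1`, `1 ↦ 0`, `* ↦ *`. -/
def barMotif {ι : Type*} (a : Motif ι) : Motif ι :=
  fun i => (a i).map (fun x => 1 - x)

/-- The polarization of a code `C ⊆ F₂ⁿ`: the union of the varieties of the
polarizations of the maximal motifs of `C`. -/
def polCode {n : ℕ} (C : Set (Fin n → F2)) : Set ((Fin n ⊕ Fin n) → F2) :=
  ⋃ a ∈ maxMot C, variety (polMotif a)

/-- The code `over-over-D-p` : the union of the varieties of `bar (pol (bar b))`
over the maximal motifs `b` of `D`. -/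
def barPolBarCode {n : ℕ} (D : Set (Fin n → F2)) : Set ((Fin n ⊕ Fin n) → F2) :=
  ⋃ b ∈ maxMot D, variety (barMotif (polMotif (barMotif b)))

/-- The formal polarization of a code `C`: the complement of `barPolBarCode` of `Cᶜ`. -/
def formalPol {n : ℕ} (C : Set (Fin n → F2)) : Set ((Fin n ⊕ Fin n) → F2) :=
  (barPolBarCode Cᶜ)ᶜ

/-- The Lagrange polynomial of a motif. -/
noncomputable def lagrange {ι : Type*} [Fintype ι] (a : Motif ι) : MvPolynomial ι F2 :=
  (∏ i ∈ Finset.univ.filter (fun i => a i = some 1), X i) *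
    ∏ j ∈ Finset.univ.filter (fun j => a j = some 0), (1 - X j)

/-- The motif (with no stars) corresponding to a word. -/
def wordMotif {ι : Type*} (w : ι → F2) : Motif ι := fun i => some (w i)

/-- The neural ideal of a code: generated by the Lagrange polynomials of the
words in the complement of the code. -/
noncomputable def neuralIdeal {ι : Type*} [Fintype ι] (C : Set (ι → F2)) :
    Ideal (MvPolynomial ι F2) :=
  Ideal.span ((fun w => lagrange (wordMotif w)) '' Cᶜ)

/-- The pseudo-monomial `∏_{i ∈ σ} X i * ∏_{j ∈ τ} (1 - X j)`. -/
noncomputable def pm {ι : Type*} (σ τ : Finset ι) : MvPolynomial ι F2 :=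
  (∏ i ∈ σ, X i) * ∏ j ∈ τ, (1 - X j)

/-- A polynomial is a pseudo-monomial if it equals `pm σ τ` for disjoint `σ τ`. -/
def IsPseudoMonomial {ι : Type*} (f : MvPolynomial ι F2) : Prop :=
  ∃ σ τ : Finset ι, Disjoint σ τ ∧ f = pm σ τ

/-- The canonical form of an ideal: the set of its minimal pseudo-monomials, i.e.
pseudo-monomials `f ∈ I` such that no pseudo-monomial `g ∈ I` of strictly smaller
degree divides `f`. -/
def CF {ι : Type*} (I : Ideal (MvPolynomial ι F2)) : Set (MvPolynomial ι F2) :=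
  {f | IsPseudoMonomial f ∧ f ∈ I ∧
    ¬ ∃ g : MvPolynomial ι F2, IsPseudoMonomial g ∧ g ∈ I ∧
      g.totalDegree < f.totalDegree ∧ g ∣ f}

/-- The polarization of the pseudo-monomial with data `(σ, τ)`:
`∏_{i ∈ σ} X i * ∏_{j ∈ τ} Y j` (here `Y j = X (Sum.inr j)`). -/
noncomputable def ppm {n : ℕ} (σ τ : Finset (Fin n)) : MvPolynomial (Fin n ⊕ Fin n) F2 :=
  (∏ i ∈ σ, X (Sum.inl i)) * ∏ j ∈ τ, X (Sum.inr j)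

/-- `g` is the polarization of the pseudo-monomial `f`. -/
def PolPM {n : ℕ} (f : MvPolynomial (Fin n) F2) (g : MvPolynomial (Fin n ⊕ Fin n) F2) : Prop :=
  ∃ σ τ : Finset (Fin n), Disjoint σ τ ∧ f = pm σ τ ∧ g = ppm σ τ

/-- The set of polarizations of the elements of a set of pseudo-monomials. -/
def polSet {n : ℕ} (S : Set (MvPolynomial (Fin n) F2)) :
    Set (MvPolynomial (Fin n ⊕ Fin n) F2) :=
  {g | ∃ f ∈ S, PolPM f g}

/-- The prime ideal of a motif: generated by `X i` for `a i = 0`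
and `1 - X j` for `a j = 1`. -/
noncomputable def pIdeal {ι : Type*} (a : Motif ι) : Ideal (MvPolynomial ι F2) :=
  Ideal.span ({f | ∃ i, a i = some 0 ∧ f = X i} ∪ {f | ∃ j, a j = some 1 ∧ f = 1 - X j})
lemma motifLE_refl' {ι : Type*} (a : Motif ι) : MotifLE a a := fun _ _ h => h

lemma exists_maxMot_le {n : ℕ} (C : Set (Fin n → F2)) :
    ∀ a : Motif (Fin n), IsMotifOf C a → ∃ b ∈ maxMot C, MotifLE a b := by
  have key : ∀ k (a : Motif (Fin n)),
      (Finset.univ.filter (fun i => (a i).isSome)).card ≤ k →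
      IsMotifOf C a → ∃ b ∈ maxMot C, MotifLE a b := by
    intro k
    induction k with
    | zero =>
      intro a hcard ha
      have hnone : ∀ i, a i = none := by
        intro i
        by_contra h
        have hi : i ∈ Finset.univ.filter (fun i => (a i).isSome) := by
          simp [Option.isSome_iff_ne_none, h]
        have : 0 < (Finset.univ.filter (fun i => (a i : Option F2).isSome)).card :=
          Finset.card_pos.mpr ⟨i, hi⟩
        omega
      refine ⟨a, ⟨ha, ?_⟩, motifLE_refl' a⟩
      intro b _ hab
      funext i
      rw [hnone i]
      cases hb : b i with
      | none => rfl
      | some x => exact absurd (hab i x hb) (by simp [hnone i])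
    | succ k ih =>
      intro a hcard ha
      by_cases hmax : ∀ b, IsMotifOf C b → MotifLE a b → a = b
      · exact ⟨a, ⟨ha, hmax⟩, motifLE_refl' a⟩
      · push_neg at hmax
        obtain ⟨b, hb, hab, hne⟩ := hmax
        have hsub : Finset.univ.filter (fun i => (b i).isSome) ⊂
            Finset.univ.filter (fun i => (a i).isSome) := by
          constructor
          · intro i hi
            simp only [Finset.mem_filter, Finset.mem_univ, true_and,
              Option.isSome_iff_exists] at hi ⊢
            obtain ⟨x, hx⟩ := hi
            exact ⟨x, hab i x hx⟩
          · intro hcontra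
            apply hne
            funext i
            cases hbi : b i with
            | some x => exact hab i x hbi
            | none =>
              by_contra h
              have : (a i).isSome := by
                cases hai : a i with
                | none => exact absurd hai h
                | some x => simp
              have hi : i ∈ Finset.univ.filter (fun i => (a i : Option F2).isSome) := by
                simp [this]
              have := hcontra hi
              simp [Finset.mem_filter, hbi] at this
        have hlt : (Finset.univ.filter (fun i => (b i).isSome)).card ≤ k := by
          have := Finset.card_lt_card hsub
          omega
        obtain ⟨c, hc, hbc⟩ := ih b hlt hb
        exact ⟨c, hc, fun i x hx => hab i x (hbc i x hx)⟩
  intro a ha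
  exact key _ a le_rfl ha

/-- if `a` is a motif of `C` then `aᵖ` is a motif of `Cᵖ`;
that is, `{aᵖ : a ∈ Mot C} ⊆ Mot (Cᵖ)`. -/
theorem polMotif_mem_mot_polCode {n : ℕ} (C : Set (Fin n → F2)) :
    polMotif '' {a : Motif (Fin n) | IsMotifOf C a} ⊆
      {b : Motif (Fin n ⊕ Fin n) | IsMotifOf (polCode C) b} := by
  rintro b ⟨a, ha, rfl⟩
  obtain ⟨c, hc, hac⟩ := exists_maxMot_le C a ha
  intro w hw
  refine Set.mem_biUnion hc ?_
  intro i x hx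
  cases i with
  | inl i =>
    simp only [polMotif] at hx
    split_ifs at hx with h
    · have : a i = some 0 := hac i 0 h
      have := hw (Sum.inl i) 0 (by simp [polMotif, this])
      simpa [← Option.some.injEq 0 x |>.mp hx] using this
  | inr i =>
    simp only [polMotif] at hx
    split_ifs at hx with h
    · have : a i = some 1 := hac i 1 h
      have := hw (Sum.inr i) 0 (by simp [polMotif, this])
      simpa [← Option.some.injEq 0 x |>.mp hx] using this
end

section
/- For any neural code C ⊆ F_2^n, the set of maximal motifs of the polarized code C^p equals the set of polarizations of the maximal motifs of C: MaxMot(C^p) = {a^p : a ∈ MaxMot(C)}. -/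
/-!
Polarized motifs take only the values `0` and `*`. If `d` is a motif of `Cᵖ`, the word obtained
from `d` by filling its stars with `1` lies in `V_{aᵖ}` for some `a ∈ MaxMot C`, and since `aᵖ`
has no `1`s this forces `d ≤ aᵖ`. Together with `aᵖ ≤ bᵖ → a ≤ b`, this transfers maximality in
both directions.
-/

open MvPolynomial

section Motif

variable {ι : Type*}

lemma MotifLE.trans {a b c : Motif ι} (hab : MotifLE a b) (hbc : MotifLE b c) : MotifLE a c :=
  fun i x h => hab i x (hbc i x h)

lemma MotifLE.antisymm {a b : Motif ι} (hab : MotifLE a b) (hba : MotifLE b a) : a = b := by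
  funext i
  cases hb : b i with
  | some x => exact hab i x hb
  | none =>
    cases ha : a i with
    | none => rfl
    | some y => simp [hba i y ha] at hb

lemma getD_one_mem_variety (d : Motif ι) : (fun i => (d i).getD 1) ∈ variety d :=
  fun i x h => by simp [h]

lemma motifLE_of_getD_one_mem_variety {d e : Motif ι} (he : ∀ i, e i ≠ some 1)
    (hw : (fun i => (d i).getD 1) ∈ variety e) : MotifLE d e := by
  intro i x hx
  have hwi := hw i x hx
  cases hd : d i with
  | some y => simp_all
  | none =>
    simp only [hd, Option.getD_none] at hwi
    exact absurd (hwi ▸ hx) (he i)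

end Motif

section Polarization

variable {n : ℕ}

lemma polMotif_inl_eq_some_zero {a : Motif (Fin n)} {i : Fin n} :
    polMotif a (.inl i) = some 0 ↔ a i = some 0 := by
  simp [polMotif]

lemma polMotif_inr_eq_some_zero {a : Motif (Fin n)} {i : Fin n} :
    polMotif a (.inr i) = some 0 ↔ a i = some 1 := by
  simp [polMotif]

lemma polMotif_ne_some_one (a : Motif (Fin n)) (j : Fin n ⊕ Fin n) : polMotif a j ≠ some 1 := by
  cases j <;> simp only [polMotif] <;> split_ifs <;> decide

lemma MotifLE.of_polMotif {a b : Motif (Fin n)} (h : MotifLE (polMotif a) (polMotif b)) :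
    MotifLE a b := by
  intro i x hx
  fin_cases x
  · exact polMotif_inl_eq_some_zero.1 (h _ _ (polMotif_inl_eq_some_zero.2 hx))
  · exact polMotif_inr_eq_some_zero.1 (h _ _ (polMotif_inr_eq_some_zero.2 hx))

variable {C : Set (Fin n → F2)}

lemma polMotif_isMotifOf_polCode {a : Motif (Fin n)} (ha : a ∈ maxMot C) :
    IsMotifOf (polCode C) (polMotif a) :=
  Set.subset_biUnion_of_mem (u := fun a => variety (polMotif a)) ha

lemma exists_maxMot_le_polMotif {d : Motif (Fin n ⊕ Fin n)} (hd : IsMotifOf (polCode C) d) :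
    ∃ a ∈ maxMot C, MotifLE d (polMotif a) := by
  obtain ⟨a, ha, hw⟩ := Set.mem_iUnion₂.1 (hd (getD_one_mem_variety d))
  exact ⟨a, ha, motifLE_of_getD_one_mem_variety (polMotif_ne_some_one a) hw⟩

end Polarization

/-- `MaxMot (Cᵖ) = {aᵖ : a ∈ MaxMot C}`. -/
theorem maxMot_polCode {n : ℕ} (C : Set (Fin n → F2)) :
    maxMot (polCode C) = polMotif '' maxMot C := by
  ext d
  constructor
  · rintro ⟨hd, hmax⟩
    obtain ⟨a, ha, hle⟩ := exists_maxMot_le_polMotif hd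
    exact ⟨a, ha, (hmax _ (polMotif_isMotifOf_polCode ha) hle).symm⟩
  · rintro ⟨a, ha, rfl⟩
    refine ⟨polMotif_isMotifOf_polCode ha, fun e he hae => ?_⟩
    obtain ⟨b, hb, heb⟩ := exists_maxMot_le_polMotif he
    obtain rfl : a = b := ha.2 b hb.1 (hae.trans heb).of_polMotif
    exact hae.antisymm heb
end

section
/- For any neural code C ⊆ F_2^n, every maximal motif of the polarized code C^p lies in {0,*}^{2n}; that is, no component of a maximal motif of C^p equals 1. -/
open MvPolynomial

/-- no component of a maximal motif of `Cᵖ` equals `1`. -/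
theorem maxMot_polCode_no_one {n : ℕ} (C : Set (Fin n → F2)) :
    ∀ b ∈ maxMot (polCode C), ∀ α : Fin n ⊕ Fin n, b α ≠ some 1 := by
  rintro b ⟨hmot, hmax⟩ α hα
  -- polMotif never takes the value `some 1`
  have hpol : ∀ (a : Motif (Fin n)) (β : Fin n ⊕ Fin n),
      polMotif a β = some 0 ∨ polMotif a β = none := by
    intro a β
    cases β with
    | inl i => simp only [polMotif]; split <;> simp
    | inr i => simp only [polMotif]; split <;> simp
  set b' : Motif (Fin n ⊕ Fin n) := Function.update b α none with hb'
  have hmot' : IsMotifOf (polCode C) b' := by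
    intro w hw
    -- patch w at α to value 1
    set w0 : (Fin n ⊕ Fin n) → F2 := Function.update w α 1 with hw0
    have hw0b : w0 ∈ variety b := by
      intro i x hx
      by_cases hi : i = α
      · subst hi
        rw [hx] at hα
        have hx1 : x = 1 := by injection hα
        simp [hw0, hx1]
      · have : b' i = some x := by simp [hb', Function.update_of_ne hi, hx]
        have := hw i x this
        simpa [hw0, Function.update_of_ne hi] using this
    have hw0C : w0 ∈ polCode C := hmot hw0b
    rcases Set.mem_iUnion₂.mp hw0C with ⟨a, ha, hwa⟩
    apply Set.mem_iUnion₂.mpr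
    refine ⟨a, ha, ?_⟩
    intro i x hx
    by_cases hi : i = α
    · subst hi
      rcases hpol a i with h | h
      · have := hwa i 0 h
        rw [hw0] at this
        simp only [Function.update_self] at this
        exact absurd this (by norm_num)
      · rw [h] at hx; exact absurd hx (by simp)
    · have := hwa i x hx
      rwa [hw0, Function.update_of_ne hi] at this
  have hle : MotifLE b b' := by
    intro i x hx
    by_cases hi : i = α
    · subst hi; simp [hb'] at hx
    · rwa [hb', Function.update_of_ne hi] at hx
  have heq := hmax b' hmot' hle
  rw [heq] at hα
  simp [hb'] at hα
end

section
/- For any neural code C ⊆ F_2^n and any maximal motif b = b_1...b_{2n} of the polarized code C^p, there is no index i ∈ {1,...,n} such that b_i = b_{n+i} = 0. -/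
open MvPolynomial

/-!
Let `b` be a maximal motif of `Cᵖ` and let `w` be the word that is `0` exactly where `b` is `0`.
Then `w ∈ V_b ⊆ Cᵖ`, so `w ∈ V_{aᵖ}` for a maximal motif `a` of `C`. Polarized motifs only
contain `0`s and `*`s, so `b ≤ aᵖ`, and maximality gives `b = aᵖ`. A polarized motif never has
`0` at both `i` and `n + i`, since `a i` cannot be both `0` and `1`.
-/

section ZeroWord

variable {ι : Type*}

def zeroWord (b : Motif ι) : ι → F2 := fun k => if b k = some 0 then 0 else 1

theorem zeroWord_mem_variety (b : Motif ι) : zeroWord b ∈ variety b := by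
  intro k x hk
  simp only [zeroWord, hk, Option.some.injEq]
  fin_cases x <;> rfl

theorem motifLE_of_zeroWord_mem_variety {a b : Motif ι} (ha : ∀ k x, a k = some x → x = 0)
    (h : zeroWord b ∈ variety a) : MotifLE b a := by
  intro k x hk
  obtain rfl := ha k x hk
  by_contra hb
  simpa [zeroWord, hb] using h k 0 hk

end ZeroWord

section Polarization

variable {n : ℕ}

theorem polMotif_eq_some {a : Motif (Fin n)} {k : Fin n ⊕ Fin n} {x : F2}
    (h : polMotif a k = some x) : x = 0 := by
  cases k <;> simp only [polMotif] at h <;> split_ifs at h <;> simp_all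

theorem not_polMotif_inl_eq_zero_and_inr_eq_zero (a : Motif (Fin n)) (i : Fin n) :
    ¬ (polMotif a (Sum.inl i) = some 0 ∧ polMotif a (Sum.inr i) = some 0) := by
  simp only [polMotif]
  split_ifs with h0 h1 <;> simp_all

theorem isMotifOf_polCode_polMotif {C : Set (Fin n → F2)} {a : Motif (Fin n)}
    (ha : a ∈ maxMot C) : IsMotifOf (polCode C) (polMotif a) :=
  Set.subset_biUnion_of_mem (u := fun a => variety (polMotif a)) ha

theorem exists_eq_polMotif_of_mem_maxMot_polCode {C : Set (Fin n → F2)}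
    {b : Motif (Fin n ⊕ Fin n)} (hb : b ∈ maxMot (polCode C)) :
    ∃ a ∈ maxMot C, b = polMotif a := by
  obtain ⟨hbC, hbmax⟩ := hb
  have hw : zeroWord b ∈ polCode C := hbC (zeroWord_mem_variety b)
  obtain ⟨a, ha, hwa⟩ := Set.mem_iUnion₂.mp hw
  have hle : MotifLE b (polMotif a) :=
    motifLE_of_zeroWord_mem_variety (fun _ _ => polMotif_eq_some) hwa
  exact ⟨a, ha, hbmax _ (isMotifOf_polCode_polMotif ha) hle⟩

end Polarization

/-- for a maximal motif `b` of `Cᵖ` there is no `i ∈ [n]` with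
`b_i = b_{n+i} = 0`. -/
theorem maxMot_polCode_no_double_zero {n : ℕ} (C : Set (Fin n → F2)) :
    ∀ b ∈ maxMot (polCode C),
      ¬ ∃ i : Fin n, b (Sum.inl i) = some 0 ∧ b (Sum.inr i) = some 0 := by
  rintro b hb ⟨i, hi⟩
  obtain ⟨a, -, rfl⟩ := exists_eq_polMotif_of_mem_maxMot_polCode hb
  exact not_polMotif_inl_eq_zero_and_inr_eq_zero a i hi
end

section
/- For any motif a ∈ M^n, the polarization of its Lagrange polynomial equals the Lagrange polynomial of the motif obtained by barring a, polarizing, and barring again: (L_a)^p = L_{\overline{\overline{a}^p}} in F_2[X_1,...,X_n,Y_1,...,Y_n]. -/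
open MvPolynomial

/-! The data `(σ, τ)` of a pseudo-monomial is determined by the polynomial (evaluate at the
indicator of `σ` and at the indicator of the complement of `τ`), so `L_a = pm σ τ` forces
`σ = {a = 1}` and `τ = {a = 0}`. On the other side, `bar((bar a)ᵖ)` has no `0` entries and
is `1` exactly at `X_i` for `a_i = 1` and at `Y_j` for `a_j = 0`, so its Lagrange polynomial
is `∏_{a_i = 1} X_i ∏_{a_j = 0} Y_j`. -/

lemma F2.eq_one_iff_ne_zero (x : F2) : x = 1 ↔ x ≠ 0 := by
  revert x; decide

lemma F2.one_sub_ne_zero_iff (x : F2) : 1 - x ≠ 0 ↔ x = 0 := by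
  revert x; decide

lemma eval_pm_eq_one_iff {ι : Type*} (σ τ : Finset ι) (v : ι → F2) :
    eval v (pm σ τ) = 1 ↔ (∀ i ∈ σ, v i = 1) ∧ ∀ j ∈ τ, v j = 0 := by
  simp only [pm, map_mul, eval_prod, map_sub, map_one, eval_X, F2.eq_one_iff_ne_zero,
    mul_ne_zero_iff, Finset.prod_ne_zero_iff, F2.one_sub_ne_zero_iff]

lemma subset_of_pm_eq_pm {ι : Type*} {σ τ σ' τ' : Finset ι} (hd : Disjoint σ τ)
    (h : pm σ τ = pm σ' τ') : σ' ⊆ σ ∧ τ' ⊆ τ := by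
  classical
  have hσ : eval (fun i => if i ∈ σ then 1 else 0) (pm σ' τ') = 1 := by
    rw [← h, eval_pm_eq_one_iff]
    exact ⟨fun i hi => if_pos hi, fun j hj => if_neg (Finset.disjoint_right.1 hd hj)⟩
  have hτ : eval (fun i => if i ∈ τ then 0 else 1) (pm σ' τ') = 1 := by
    rw [← h, eval_pm_eq_one_iff]
    exact ⟨fun i hi => if_neg (Finset.disjoint_left.1 hd hi), fun j hj => if_pos hj⟩
  rw [eval_pm_eq_one_iff] at hσ hτ
  refine ⟨fun i hi => ?_, fun j hj => ?_⟩
  · by_contra hi'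
    simpa [hi'] using hσ.1 i hi
  · by_contra hj'
    simpa [hj'] using hτ.2 j hj

lemma eq_and_eq_of_pm_eq_pm {ι : Type*} {σ τ σ' τ' : Finset ι} (hd : Disjoint σ τ)
    (hd' : Disjoint σ' τ') (h : pm σ τ = pm σ' τ') : σ = σ' ∧ τ = τ' := by
  obtain ⟨hσ', hτ'⟩ := subset_of_pm_eq_pm hd h
  obtain ⟨hσ, hτ⟩ := subset_of_pm_eq_pm hd' h.symm
  exact ⟨hσ.antisymm hσ', hτ.antisymm hτ'⟩

lemma lagrange_eq_pm {ι : Type*} [Fintype ι] (a : Motif ι) :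
    lagrange a = pm {i | a i = some 1} {j | a j = some 0} := rfl

lemma disjoint_filter_eq_some_one_filter_eq_some_zero {ι : Type*} [Fintype ι] (a : Motif ι) :
    Disjoint ({i | a i = some 1} : Finset ι) ({j | a j = some 0} : Finset ι) := by
  rw [Finset.disjoint_filter]
  intro i _ h1 h0
  simp [h1] at h0

lemma barMotif_polMotif_barMotif_inl {n : ℕ} (a : Motif (Fin n)) (i : Fin n) :
    barMotif (polMotif (barMotif a)) (Sum.inl i) = if a i = some 1 then some 1 else none := by
  rcases ha : a i with _ | x
  · simp [barMotif, polMotif, ha]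
  · fin_cases x <;> simp [barMotif, polMotif, ha] <;> decide

lemma barMotif_polMotif_barMotif_inr {n : ℕ} (a : Motif (Fin n)) (j : Fin n) :
    barMotif (polMotif (barMotif a)) (Sum.inr j) = if a j = some 0 then some 1 else none := by
  rcases ha : a j with _ | x
  · simp [barMotif, polMotif, ha]
  · fin_cases x <;> simp [barMotif, polMotif, ha]

lemma lagrange_barMotif_polMotif_barMotif {n : ℕ} (a : Motif (Fin n)) :
    lagrange (barMotif (polMotif (barMotif a))) = ppm {i | a i = some 1} {j | a j = some 0} := by
  have hzeros : ({k | barMotif (polMotif (barMotif a)) k = some 0} : Finset _) = ∅ := by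
    ext (i | j)
    · by_cases h : a i = some 1 <;> simp [barMotif_polMotif_barMotif_inl, h]
    · by_cases h : a j = some 0 <;> simp [barMotif_polMotif_barMotif_inr, h]
  have hones : ({k | barMotif (polMotif (barMotif a)) k = some 1} : Finset _) =
      Finset.disjSum {i | a i = some 1} {j | a j = some 0} := by
    ext (i | j)
    · by_cases h : a i = some 1 <;> simp [barMotif_polMotif_barMotif_inl, h]
    · by_cases h : a j = some 0 <;> simp [barMotif_polMotif_barMotif_inr, h]
  rw [lagrange, hzeros, hones, Finset.prod_empty, mul_one, Finset.prod_disjSum, ppm]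

/-- `(L_a)ᵖ = L_{bar((bar a)ᵖ)}`: if `L_a` is the pseudo-monomial with
data `(σ, τ)` (with `σ, τ` disjoint), then its polarization `∏_{i∈σ} X_i ∏_{j∈τ} Y_j`
equals the Lagrange polynomial of `bar((bar a)ᵖ)`. -/
theorem polarization_lagrange {n : ℕ} (a : Motif (Fin n)) :
    ∀ σ τ : Finset (Fin n), Disjoint σ τ → lagrange a = pm σ τ →
      ppm σ τ = lagrange (barMotif (polMotif (barMotif a))) := by
  intro σ τ hd h
  rw [lagrange_eq_pm] at h
  obtain ⟨rfl, rfl⟩ := eq_and_eq_of_pm_eq_pm (disjoint_filter_eq_some_one_filter_eq_some_zero a) hd h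
  exact (lagrange_barMotif_polMotif_barMotif a).symm
end

section
/- Let C ⊆ F_2^n be a neural code and b ∈ M^n a motif. Then b is a motif of the complement ^cC if and only if b is disjoint with every motif a of C. Moreover, MaxMot(^cC) equals the set of maximal elements (with respect to the partial order on motifs) of the set of motifs b ∈ M^n that are disjoint with every maximal motif of C. -/
open MvPolynomial

lemma f2_ne_imp : ∀ x y : F2, ¬ y = x → y = 1 - x := by decide

lemma motifLE_trans' {ι : Type*} {a b c : Motif ι} (h1 : MotifLE a b) (h2 : MotifLE b c) :
    MotifLE a c := fun i x h => h1 i x (h2 i x h)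

/-- If motifs are not disjoint, their varieties share a common word. -/
lemma exists_common_word {ι : Type*} {a b : Motif ι} (h : ¬ DisjointMotifs b a) :
    ∃ w : ι → F2, w ∈ variety a ∧ w ∈ variety b := by
  refine ⟨fun i => (b i).getD ((a i).getD 0), ?_, ?_⟩
  · intro i y hy
    rcases hb : b i with _ | x
    · simp [hb, hy]
    · have hxy : y = x := by
        by_contra hne
        have hy1 : y = 1 - x := f2_ne_imp x y hne
        exact h ⟨i, x, hb, by rw [hy, hy1]⟩
      simp [hb, hxy]
  · intro i x hx
    simp [hx]

lemma card_lt_of_motifLE {n : ℕ} {a b : Motif (Fin n)} (hle : MotifLE a b) (hne : a ≠ b) :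
    (Finset.univ.filter (fun i => b i ≠ none)).card
      < (Finset.univ.filter (fun i => a i ≠ none)).card := by
  apply Finset.card_lt_card
  constructor
  · intro i hi
    simp only [Finset.mem_filter, Finset.mem_univ, true_and] at hi ⊢
    rcases hb : b i with _ | x
    · exact absurd hb hi
    · rw [hle i x hb]; simp
  · intro hsub
    apply hne
    funext i
    rcases hb : b i with _ | x
    · by_contra hab
      have hia : i ∈ Finset.univ.filter (fun i => a i ≠ none) := by
        simp only [Finset.mem_filter, Finset.mem_univ, true_and]
        exact hab
      have := hsub hia
      simp only [Finset.mem_filter, Finset.mem_univ, true_and] at this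
      exact this hb
    · exact hle i x hb

/-- Every motif of `C` lies below a maximal motif of `C`. -/
lemma exists_maxMot_above {n : ℕ} (C : Set (Fin n → F2)) (a : Motif (Fin n))
    (ha : IsMotifOf C a) : ∃ a' ∈ maxMot C, MotifLE a a' := by
  have key : ∀ k (a : Motif (Fin n)),
      (Finset.univ.filter (fun i => a i ≠ none)).card ≤ k →
      IsMotifOf C a → ∃ a' ∈ maxMot C, MotifLE a a' := by
    intro k
    induction k with
    | zero =>
      intro a hcard ha
      refine ⟨a, ⟨ha, ?_⟩, motifLE_refl' a⟩
      intro b hb hab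
      by_contra hne
      have := card_lt_of_motifLE hab hne
      omega
    | succ k ih =>
      intro a hcard ha
      by_cases hmax : ∀ b : Motif (Fin n), IsMotifOf C b → MotifLE a b → a = b
      · exact ⟨a, ⟨ha, hmax⟩, motifLE_refl' a⟩
      · push_neg at hmax
        obtain ⟨b, hb, hab, hne⟩ := hmax
        have hlt := card_lt_of_motifLE hab hne
        obtain ⟨a', ha', hba'⟩ := ih b (by omega) hb
        exact ⟨a', ha', motifLE_trans' hab hba'⟩
  exact key _ a le_rfl ha

lemma sub_self_ne (x : F2) : x ≠ 1 - x := by revert x; decide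

/-- Part 1 of the theorem as a standalone lemma. -/
lemma isMotifOf_compl_iff {n : ℕ} (C : Set (Fin n → F2)) (b : Motif (Fin n)) :
    IsMotifOf Cᶜ b ↔ ∀ a : Motif (Fin n), IsMotifOf C a → DisjointMotifs b a := by
  constructor
  · intro hb a ha
    by_contra hnd
    obtain ⟨w, hwa, hwb⟩ := exists_common_word hnd
    exact hb hwb (ha hwa)
  · intro h w hw hwC
    have hwm : IsMotifOf C (wordMotif w) := by
      intro v hv
      have : v = w := funext fun i => hv i (w i) rfl
      rw [this]; exact hwC
    obtain ⟨i, x, hbi, hwi⟩ := h (wordMotif w) hwm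
    have h1 : w i = x := hw i x hbi
    have h2 : w i = 1 - x := Option.some_injective _ hwi
    exact sub_self_ne x (h1 ▸ h2)

lemma isMotifOf_compl_iff_max {n : ℕ} (C : Set (Fin n → F2)) (b : Motif (Fin n)) :
    IsMotifOf Cᶜ b ↔ ∀ a ∈ maxMot C, DisjointMotifs b a := by
  rw [isMotifOf_compl_iff]
  constructor
  · intro h a ha; exact h a ha.1
  · intro h a ha
    obtain ⟨a', ha', haa'⟩ := exists_maxMot_above C a ha
    obtain ⟨i, x, hbi, hai⟩ := h a' ha'
    exact ⟨i, x, hbi, haa' i _ hai⟩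

/-- `b ∈ Mot(ᶜC)` iff `b` is disjoint with every motif of `C`; and
`MaxMot(ᶜC)` is the set of maximal elements among the motifs disjoint with every
maximal motif of `C`. -/
theorem mot_complement_iff_disjoint {n : ℕ} (C : Set (Fin n → F2)) :
    (∀ b : Motif (Fin n),
      (IsMotifOf Cᶜ b ↔ ∀ a : Motif (Fin n), IsMotifOf C a → DisjointMotifs b a)) ∧
    maxMot Cᶜ =
      {b : Motif (Fin n) | (∀ a ∈ maxMot C, DisjointMotifs b a) ∧
        ∀ b' : Motif (Fin n), (∀ a ∈ maxMot C, DisjointMotifs b' a) →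
          MotifLE b b' → b = b'} := by
  refine ⟨isMotifOf_compl_iff C, ?_⟩
  ext b
  simp only [maxMot, Set.mem_setOf_eq]
  constructor
  · rintro ⟨hb, hmax⟩
    refine ⟨(isMotifOf_compl_iff_max C b).mp hb, fun b' hb' hle => ?_⟩
    exact hmax b' ((isMotifOf_compl_iff_max C b').mpr hb') hle
  · rintro ⟨hb, hmax⟩
    refine ⟨(isMotifOf_compl_iff_max C b).mpr hb, fun b' hb' hle => ?_⟩
    exact hmax b' ((isMotifOf_compl_iff_max C b').mp hb') hle
end

section
/- Let C ⊆ F_2^n be a neural code. If b ∈ MaxMot(^c(C^p)) is a maximal motif of the complement of the polarized code C^p ⊆ F_2^{2n}, then every component of b that is different from * is equal to 1. -/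
open MvPolynomial

lemma polMotif_eq_zero {n : ℕ} (a : Motif (Fin n)) (β : Fin n ⊕ Fin n) (x : F2)
    (h : polMotif a β = some x) : x = 0 := by
  cases β with
  | inl i =>
    simp only [polMotif] at h
    split at h
    · exact (Option.some_injective _ h).symm
    · exact absurd h (by simp)
  | inr i =>
    simp only [polMotif] at h
    split at h
    · exact (Option.some_injective _ h).symm
    · exact absurd h (by simp)

/-- every non-`*` component of a maximal motif of `ᶜ(Cᵖ)` equals `1`. -/
theorem maxMot_compl_polCode_components_one {n : ℕ} (C : Set (Fin n → F2)) :
    ∀ b ∈ maxMot ((polCode C)ᶜ), ∀ (α : Fin n ⊕ Fin n) (x : F2),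
      b α = some x → x = 1 := by
  intro b hb α x hbx
  by_contra hx
  have hx0 : x = 0 := by
    have : ∀ y : F2, y ≠ 1 → y = 0 := by decide
    exact this x hx
  subst hx0
  set b' : Motif (Fin n ⊕ Fin n) := Function.update b α none with hb'
  have hmot : IsMotifOf ((polCode C)ᶜ) b' := by
    intro w hw hwC
    rw [polCode, Set.mem_iUnion₂] at hwC
    obtain ⟨a, ha, hwa⟩ := hwC
    set w' : (Fin n ⊕ Fin n) → F2 := Function.update w α 0 with hw'
    have hw'a : w' ∈ variety (polMotif a) := by
      intro β y hβ
      by_cases hβα : β = α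
      · subst hβα
        rw [hw', Function.update_self]
        exact (polMotif_eq_zero a β y hβ).symm
      · rw [hw', Function.update_of_ne hβα]
        exact hwa β y hβ
    have hw'b : w' ∈ variety b := by
      intro β y hβ
      by_cases hβα : β = α
      · subst hβα
        rw [hbx] at hβ
        rw [hw', Function.update_self]
        exact Option.some_injective _ hβ
      · rw [hw', Function.update_of_ne hβα]
        apply hw
        rw [hb', Function.update_of_ne hβα]
        exact hβ
    exact hb.1 hw'b (by rw [polCode, Set.mem_iUnion₂]; exact ⟨a, ha, hw'a⟩)
  have hle : MotifLE b b' := by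
    intro i y hi
    by_cases hiα : i = α
    · subst hiα
      rw [hb', Function.update_self] at hi
      exact absurd hi (by simp)
    · rw [hb', Function.update_of_ne hiα] at hi
      exact hi
  have heq := hb.2 b' hmot hle
  have : b α = b' α := by rw [heq]
  rw [hb', Function.update_self, hbx] at this
  exact absurd this (by simp)
end

section
/- Two motifs a and b from M^n are disjoint if and only if the motifs a^p and \overline{\overline{b}^p} from M^{2n} are disjoint. -/
open MvPolynomial

lemma disjointMotifs_iff {ι : Type*} {a b : Motif ι} :
    DisjointMotifs a b ↔
      ∃ i, (a i = some 0 ∧ b i = some 1) ∨ (a i = some 1 ∧ b i = some 0) :=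
  exists_congr fun _ => Fin.exists_fin_two

lemma barMotif_eq_some {ι : Type*} {a : Motif ι} {i : ι} {x : F2} :
    barMotif a i = some x ↔ a i = some (1 - x) := by
  simp only [barMotif, Option.map_eq_some_iff]
  constructor
  · rintro ⟨y, hy, rfl⟩
    simpa using hy
  · intro h
    exact ⟨1 - x, h, sub_sub_cancel 1 x⟩

section Polarization

variable {n : ℕ} {a : Motif (Fin n)} {i : Fin n} {x : F2}

lemma polMotif_inl_eq_some : polMotif a (Sum.inl i) = some x ↔ a i = some 0 ∧ x = 0 := by
  simp only [polMotif]
  split_ifs with h <;> simp [h, eq_comm]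

lemma polMotif_inr_eq_some : polMotif a (Sum.inr i) = some x ↔ a i = some 1 ∧ x = 0 := by
  simp only [polMotif]
  split_ifs with h <;> simp [h, eq_comm]

lemma barMotif_polMotif_barMotif_inl_eq_some :
    barMotif (polMotif (barMotif a)) (Sum.inl i) = some x ↔ a i = some 1 ∧ x = 1 := by
  rw [barMotif_eq_some, polMotif_inl_eq_some, barMotif_eq_some, sub_eq_zero, eq_comm (a := 1)]
  simp

lemma barMotif_polMotif_barMotif_inr_eq_some :
    barMotif (polMotif (barMotif a)) (Sum.inr i) = some x ↔ a i = some 0 ∧ x = 1 := by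
  rw [barMotif_eq_some, polMotif_inr_eq_some, barMotif_eq_some, sub_eq_zero, eq_comm (a := 1)]
  simp

end Polarization

/-- `a` and `b` are disjoint iff `aᵖ` and `bar((bar b)ᵖ)` are disjoint. -/
theorem disjoint_iff_polarized_disjoint {n : ℕ} (a b : Motif (Fin n)) :
    DisjointMotifs a b ↔
      DisjointMotifs (polMotif a) (barMotif (polMotif (barMotif b))) := by
  rw [disjointMotifs_iff, exists_or]
  simp only [DisjointMotifs, Sum.exists, polMotif_inl_eq_some, polMotif_inr_eq_some,
    barMotif_polMotif_barMotif_inl_eq_some, barMotif_polMotif_barMotif_inr_eq_some]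
  simp
end

section
/- Let C ⊆ F_2^n be a neural code and D = ^cC its complement. Then C^p ⊆ ^c(\overline{\overline{D}^p}); in other words, the polarization C^p is contained in the formal polarization C^[p]. -/
open MvPolynomial

/-- with `D = ᶜC`, we have `Cᵖ ⊆ ᶜ(bar((bar D)ᵖ))`, i.e. `Cᵖ ⊆ C^[p]`. -/
theorem polCode_subset_formalPol {n : ℕ} (C D : Set (Fin n → F2)) (hD : D = Cᶜ) :
    polCode C ⊆ (barPolBarCode D)ᶜ := by
  subst hD
  intro w hw hw'
  simp only [polCode, Set.mem_iUnion] at hw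
  obtain ⟨a, ha, hwa⟩ := hw
  simp only [barPolBarCode, Set.mem_iUnion] at hw'
  obtain ⟨b, hb, hwb⟩ := hw'
  have haM : IsMotifOf C a := ha.1
  have hbM : IsMotifOf Cᶜ b := hb.1
  have hF2 : ∀ z : F2, z = 0 ∨ z = 1 := by decide
  by_cases hconf : ∃ i x y, a i = some x ∧ b i = some y ∧ x ≠ y
  · obtain ⟨i, x, y, hax, hby, hxy⟩ := hconf
    rcases hF2 x with hx | hx <;> rcases hF2 y with hy | hy <;> subst hx <;> subst hy
    · exact hxy rfl
    · have h1 : w (Sum.inl i) = 0 := hwa (Sum.inl i) 0 (by simp [polMotif, hax])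
      have h2 : w (Sum.inl i) = 1 := hwb (Sum.inl i) 1 (by simp [barMotif, polMotif, hby])
      rw [h1] at h2
      exact zero_ne_one h2
    · have h1 : w (Sum.inr i) = 0 := hwa (Sum.inr i) 0 (by simp [polMotif, hax])
      have h2 : w (Sum.inr i) = 1 := hwb (Sum.inr i) 1 (by simp [barMotif, polMotif, hby])
      rw [h1] at h2
      exact zero_ne_one h2
    · exact hxy rfl
  · push_neg at hconf
    set w0 : Fin n → F2 := fun i => (a i).getD ((b i).getD 0) with hw0
    have hw0a : w0 ∈ variety a := by
      intro i x hax
      simp [hw0, hax]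
    have hw0b : w0 ∈ variety b := by
      intro i y hby
      cases hax : a i with
      | none => simp [hw0, hax, hby]
      | some x =>
        have := hconf i x y hax hby
        simp [hw0, hax, this]
    exact hbM hw0b (haM hw0a)
end

section
/- Let C ⊆ F_2^n be a neural code. Then the canonical form of the polarized neural ideal equals the set of polarizations of the elements of the canonical form of J_C: CF((J_C)^p) = {f^p : f ∈ CF(J_C)}. -/
open MvPolynomial

/-!
`(J_C)ᵖ` is a squarefree monomial ideal, generated by the `fᵖ = ∏_{σ ⊔ τ} X` with
`f = pm σ τ ∈ CF(J_C)`. A pseudo-monomial `pm α β` has the monomial `X^α` in its support, so it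
lies in a monomial ideal only if some generator divides `X^α`. Polarization preserves degrees
and (for pseudo-monomials) divisibility, so a pseudo-monomial of `(J_C)ᵖ` of minimal degree must
be a generator, and a generator `fᵖ` cannot be undercut, since a smaller one would come from a
pseudo-monomial of `J_C` properly dividing the minimal `f`.
-/

open MvPolynomial Finset

section SquarefreeMonomial

variable {ι R : Type*}

noncomputable def sqfreeExp (s : Finset ι) : ι →₀ ℕ := ∑ i ∈ s, Finsupp.single i 1

lemma sqfreeExp_apply [DecidableEq ι] (s : Finset ι) (i : ι) :
    sqfreeExp s i = if i ∈ s then 1 else 0 := by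
  simp [sqfreeExp, Finsupp.finsetSum_apply, Finsupp.single_apply]

lemma sqfreeExp_le_sqfreeExp_iff [DecidableEq ι] {s t : Finset ι} :
    sqfreeExp s ≤ sqfreeExp t ↔ s ⊆ t := by
  simp only [Finsupp.le_def, sqfreeExp_apply]
  refine ⟨fun h i hs => ?_, fun h i => ?_⟩
  · by_contra ht
    simpa [hs, ht] using h i
  · by_cases hs : i ∈ s
    · simp [hs, h hs]
    · simp [hs]

lemma monomial_sqfreeExp [CommSemiring R] (s : Finset ι) :
    monomial (sqfreeExp s) (1 : R) = ∏ i ∈ s, X i :=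
  monomial_sum_one s _

end SquarefreeMonomial

lemma MvPolynomial.totalDegree_prod_of_isDomain {σ ι R : Type*} [CommRing R] [IsDomain R]
    (s : Finset ι) {f : ι → MvPolynomial σ R} (hf : ∀ i ∈ s, f i ≠ 0) :
    (∏ i ∈ s, f i).totalDegree = ∑ i ∈ s, (f i).totalDegree := by
  classical
  induction s using Finset.induction_on with
  | empty => simp
  | insert a s ha ih =>
    rw [prod_insert ha, sum_insert ha, totalDegree_mul_of_isDomain (hf a (mem_insert_self a s))
      (prod_ne_zero_iff.mpr fun i hi => hf i (mem_insert_of_mem hi)),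
      ih fun i hi => hf i (mem_insert_of_mem hi)]

section PseudoMonomial

variable {ι : Type*}

lemma totalDegree_one_sub_X (j : ι) : (1 - X j : MvPolynomial ι F2).totalDegree = 1 := by
  rw [sub_eq_add_neg, totalDegree_add_eq_right_of_totalDegree_lt] <;>
    simp [totalDegree_neg, totalDegree_X]

lemma totalDegree_pm (σ τ : Finset ι) : (pm σ τ).totalDegree = #σ + #τ := by
  have hX : ∀ i ∈ σ, (X i : MvPolynomial ι F2) ≠ 0 := fun i _ => X_ne_zero i
  have hY : ∀ j ∈ τ, (1 - X j : MvPolynomial ι F2) ≠ 0 := fun j _ h => by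
    simpa [totalDegree_one_sub_X] using congrArg totalDegree h
  rw [pm, totalDegree_mul_of_isDomain (prod_ne_zero_iff.mpr hX) (prod_ne_zero_iff.mpr hY),
    totalDegree_prod_of_isDomain σ hX, totalDegree_prod_of_isDomain τ hY]
  simp [totalDegree_X, totalDegree_one_sub_X]

lemma pm_dvd_pm [DecidableEq ι] {σ' τ' σ τ : Finset ι} (hσ : σ' ⊆ σ) (hτ : τ' ⊆ τ) :
    pm σ' τ' ∣ pm σ τ :=
  ⟨pm (σ \ σ') (τ \ τ'), by rw [pm, pm, pm, ← prod_sdiff hσ, ← prod_sdiff hτ]; ring⟩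

lemma subset_of_pm_dvd_prod_X {α β V : Finset ι} (h : pm α β ∣ ∏ k ∈ V, X k) : α ⊆ V := by
  classical
  intro i hi
  have hXi : X i ∣ monomial (sqfreeExp V) (1 : F2) := by
    rw [monomial_sqfreeExp]
    exact (dvd_mul_of_dvd_left (dvd_prod_of_mem _ hi) _).trans h
  simpa [sqfreeExp_apply] using hXi

lemma coeff_sqfreeExp_pm (σ τ : Finset ι) : coeff (sqfreeExp σ) (pm σ τ) = 1 := by
  rw [pm, ← monomial_sqfreeExp, coeff_monomial_mul', if_pos le_rfl, tsub_self, one_mul,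
    ← constantCoeff_eq, map_prod]
  simp

lemma exists_le_sqfreeExp_of_pm_mem_span {T : Set (ι →₀ ℕ)} {α β : Finset ι}
    (h : pm α β ∈ Ideal.span ((fun t => monomial t (1 : F2)) '' T)) :
    ∃ t ∈ T, t ≤ sqfreeExp α :=
  mem_ideal_span_monomial_image.mp h _ <| by
    rw [mem_support_iff, coeff_sqfreeExp_pm]
    exact one_ne_zero

lemma totalDegree_le_of_mem_CF {I : Ideal (MvPolynomial ι F2)} {f g : MvPolynomial ι F2}
    (hf : f ∈ CF I) (hg : IsPseudoMonomial g) (hgI : g ∈ I) (hgf : g ∣ f) :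
    f.totalDegree ≤ g.totalDegree :=
  not_lt.mp fun hlt => hf.2.2 ⟨g, hg, hgI, hlt, hgf⟩

end PseudoMonomial

section Polarization

variable {n : ℕ}

lemma ppm_eq_prod_X (σ τ : Finset (Fin n)) : ppm σ τ = ∏ k ∈ σ.disjSum τ, X k :=
  (prod_disjSum σ τ X).symm

lemma ppm_eq_pm (σ τ : Finset (Fin n)) : ppm σ τ = pm (σ.disjSum τ) ∅ := by
  rw [pm, prod_empty, mul_one, ppm_eq_prod_X]

lemma polSet_eq_image_monomial (S : Set (MvPolynomial (Fin n) F2)) :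
    polSet S = (fun t => monomial t (1 : F2)) ''
      {t | ∃ f ∈ S, ∃ σ τ, Disjoint σ τ ∧ f = pm σ τ ∧ t = sqfreeExp (σ.disjSum τ)} := by
  ext g
  constructor
  · rintro ⟨f, hf, σ, τ, hd, rfl, rfl⟩
    exact ⟨_, ⟨_, hf, σ, τ, hd, rfl, rfl⟩, (monomial_sqfreeExp _).trans (ppm_eq_prod_X σ τ).symm⟩
  · rintro ⟨_, ⟨f, hf, σ, τ, hd, rfl, rfl⟩, rfl⟩
    exact ⟨_, hf, σ, τ, hd, rfl, (monomial_sqfreeExp _).trans (ppm_eq_prod_X σ τ).symm⟩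

lemma exists_disjSum_subset_of_pm_mem_span {S : Set (MvPolynomial (Fin n) F2)}
    {α β : Finset (Fin n ⊕ Fin n)} (h : pm α β ∈ Ideal.span (polSet S)) :
    ∃ f ∈ S, ∃ σ τ, Disjoint σ τ ∧ f = pm σ τ ∧ σ.disjSum τ ⊆ α := by
  rw [polSet_eq_image_monomial] at h
  obtain ⟨_, ⟨f, hf, σ, τ, hd, rfl, rfl⟩, hle⟩ := exists_le_sqfreeExp_of_pm_mem_span h
  exact ⟨_, hf, σ, τ, hd, rfl, sqfreeExp_le_sqfreeExp_iff.mp hle⟩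

variable {I : Ideal (MvPolynomial (Fin n) F2)}

lemma CF_span_polSet_CF_subset : CF (Ideal.span (polSet (CF I))) ⊆ polSet (CF I) := by
  intro g hg
  obtain ⟨⟨σ, τ, -, rfl⟩, hgJ, -⟩ := id hg
  obtain ⟨f, hf, σ', τ', hd', rfl, hsub⟩ := exists_disjSum_subset_of_pm_mem_span hgJ
  have hmin := totalDegree_le_of_mem_CF hg ⟨_, ∅, disjoint_empty_right _, ppm_eq_pm σ' τ'⟩
    (Ideal.subset_span ⟨_, hf, σ', τ', hd', rfl, rfl⟩)
    (ppm_eq_pm σ' τ' ▸ pm_dvd_pm hsub (empty_subset τ))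
  rw [ppm_eq_pm, totalDegree_pm, totalDegree_pm, card_empty] at hmin
  have hτ : τ = ∅ := card_eq_zero.mp (by have := card_le_card hsub; omega)
  have hσ : σ'.disjSum τ' = σ := eq_of_subset_of_card_le hsub (by omega)
  exact ⟨_, hf, σ', τ', hd', rfl, by rw [hτ, ← hσ, ppm_eq_pm]⟩

lemma polSet_CF_subset_CF_span : polSet (CF I) ⊆ CF (Ideal.span (polSet (CF I))) := by
  rintro _ ⟨f, hf, σ, τ, hd, rfl, rfl⟩
  refine ⟨⟨_, ∅, disjoint_empty_right _, ppm_eq_pm σ τ⟩,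
    Ideal.subset_span ⟨_, hf, σ, τ, hd, rfl, rfl⟩, ?_⟩
  rintro ⟨_, ⟨α, β, -, rfl⟩, hJ, hlt, hdvd⟩
  have hα : α ⊆ σ.disjSum τ := subset_of_pm_dvd_prod_X (ppm_eq_prod_X σ τ ▸ hdvd)
  obtain ⟨f', hf', σ', τ', hd', rfl, hsub⟩ := exists_disjSum_subset_of_pm_mem_span hJ
  have hστ : σ' ⊆ σ ∧ τ' ⊆ τ := by simpa using disjSum_subset.mp (hsub.trans hα)
  have hmin := totalDegree_le_of_mem_CF hf ⟨σ', τ', hd', rfl⟩ hf'.2.1 (pm_dvd_pm hστ.1 hστ.2)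
  rw [ppm_eq_pm, totalDegree_pm, totalDegree_pm, card_empty, card_disjSum] at hlt
  rw [totalDegree_pm, totalDegree_pm] at hmin
  have hcard := card_le_card hsub
  rw [card_disjSum] at hcard
  -- `#σ' + #τ' ≤ #α ≤ deg h < #σ + #τ ≤ #σ' + #τ'`
  omega

theorem CF_span_polSet_CF (I : Ideal (MvPolynomial (Fin n) F2)) :
    CF (Ideal.span (polSet (CF I))) = polSet (CF I) :=
  CF_span_polSet_CF_subset.antisymm polSet_CF_subset_CF_span

end Polarization

/-- `CF((J_C)ᵖ) = {fᵖ : f ∈ CF(J_C)}`, where `(J_C)ᵖ` is the ideal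
generated by the polarizations of the elements of `CF(J_C)`. -/
theorem CF_polarized_neuralIdeal {n : ℕ} (C : Set (Fin n → F2)) :
    CF (Ideal.span (polSet (CF (neuralIdeal C)))) = polSet (CF (neuralIdeal C)) :=
  CF_span_polSet_CF (neuralIdeal C)
end
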